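/- Every anticommutator-friendly non-crossing pairing of {1,...,4m} is obtained by 'doubling' a non-crossing pairing π of {1,...,2m} that contains the pair {1,2m}: the doubling replaces each pair of π by two nested/adjacent pairs in the natural way, and this establishes a bijection between {π ∈ NC_2(2m) : {1,2m} ∈ π} and the set of anticommutator-friendly pairings in NC_2(4m). -/

import Mathlib

open Finset

/-- Partitions of `{1,...,n}`, modelled as finpartitions of `Fin n`. -/
abbrev NCPart (n : ℕ) := Finpartition (Finset.univ : Finset (Fin n))

/-- `i` and `j` lie in the same block of `π`. -/
def SameBlock {n : ℕ} (π : NCPart n) (i j : Fin n) : Prop :=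
  ∃ B ∈ π.parts, i ∈ B ∧ j ∈ B

/-- `π` is a non-crossing partition. -/
def IsNoncrossing {n : ℕ} (π : NCPart n) : Prop :=
  ∀ i1 i2 i3 i4 : Fin n, i1 < i2 → i2 < i3 → i3 < i4 →
    SameBlock π i1 i3 → SameBlock π i2 i4 → SameBlock π i1 i2

/-- `π` is an interval partition: every block is an integer interval. -/
def IsIntervalPart {n : ℕ} (π : NCPart n) : Prop :=
  ∀ B ∈ π.parts, ∃ i j : Fin n, i ≤ j ∧ B = Finset.Icc i j

/-- The nesting order: `V ⊑ W` iff `min W ≤ min V` and `max V ≤ max W`. -/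
def Nested {n : ℕ} (V W : Finset (Fin n)) : Prop :=
  W.min ≤ V.min ∧ V.max ≤ W.max

def StrictNested {n : ℕ} (V W : Finset (Fin n)) : Prop :=
  Nested V W ∧ V ≠ W

/-- An outer block: a block maximal with respect to the nesting order. -/
def IsOuter {n : ℕ} (π : NCPart n) (W : Finset (Fin n)) : Prop :=
  W ∈ π.parts ∧ ∀ V ∈ π.parts, Nested W V → V = W

/-- `P` is the parent block of `V` in `π`. -/
def IsParent {n : ℕ} (π : NCPart n) (V P : Finset (Fin n)) : Prop :=
  P ∈ π.parts ∧ StrictNested V P ∧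
    ¬ ∃ V' ∈ π.parts, StrictNested V V' ∧ StrictNested V' P

/-- `π` refines `ρ`: every block of `ρ` is a union of blocks of `π`. -/
def Refines {n : ℕ} (π ρ : NCPart n) : Prop :=
  ∀ B ∈ π.parts, ∃ C ∈ ρ.parts, B ⊆ C

/-- The partial order `π ≪ ρ`. -/
def LL {n : ℕ} (π ρ : NCPart n) : Prop :=
  Refines π ρ ∧ ∀ W ∈ ρ.parts, ∃ V ∈ π.parts, V ⊆ W ∧ V.min = W.min ∧ V.max = W.max

/-- The colouring `c` is constant on every block of `π`. -/
def MonoChrome {n s : ℕ} (c : Fin n → Fin s) (π : NCPart n) : Prop :=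
  ∀ B ∈ π.parts, ∀ i ∈ B, ∀ j ∈ B, c i = c j

/-- Vertical no-repeat property: every inner block has colour different from its parent. -/
def VNRP {n s : ℕ} (c : Fin n → Fin s) (π : NCPart n) : Prop :=
  ∀ V P : Finset (Fin n), V ∈ π.parts → IsParent π V P →
    ∀ i ∈ V, ∀ j ∈ P, c i ≠ c j

/-- The depth of (the block of) `j` in `π`: the number of blocks strictly nesting it. -/
noncomputable def blockDepth {n : ℕ} (π : NCPart n) (j : Fin n) : ℕ :=
  Set.ncard {W : Finset (Fin n) | W ∈ π.parts ∧ ∃ B ∈ π.parts, j ∈ B ∧ StrictNested B W}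

/-- `j` is the maximum of an outer block of `π`. -/
def IsOuterMax {n : ℕ} (π : NCPart n) (j : Fin n) : Prop :=
  ∃ B, IsOuter π B ∧ j ∈ B ∧ ∀ i ∈ B, i ≤ j

/-- `j` is the minimum of an outer block of `π`. -/
def IsOuterMin {n : ℕ} (π : NCPart n) (j : Fin n) : Prop :=
  ∃ B, IsOuter π B ∧ j ∈ B ∧ ∀ i ∈ B, j ≤ i

/-- Anticommutator-friendly partitions of `{1,...,2n}` (0-indexed: odd numbers
`1,3,...,2n-1` correspond to even indices, and `2n` to index `2n-1`). -/
def ACFriendly (n : ℕ) (π : NCPart (2*n)) : Prop :=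
  (∀ j : Fin (2*n), IsOuterMax π j → Even (j : ℕ) ∨ (j : ℕ) = 2*n - 1) ∧
  (∀ j j' : Fin (2*n), Even (j : ℕ) → (j' : ℕ) = (j : ℕ) + 1 → ¬ IsOuterMax π j →
    blockDepth π j ≠ blockDepth π j')

/-- A pairing: every block has exactly two elements. -/
def IsPairing {n : ℕ} (π : NCPart n) : Prop :=
  ∀ B ∈ π.parts, B.card = 2

/-- A block-projection for `π`. -/
structure BlockProjection {n : ℕ} (π : NCPart n) where
  toFun : {B : Finset (Fin n) // B ∈ π.parts} → {B : Finset (Fin n) // B ∈ π.parts}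
  idem : ∀ A, toFun (toFun A) = toFun A
  mono : ∀ A B, Nested A.val B.val → Nested (toFun A).val (toFun B).val
  le_apply : ∀ A, Nested A.val (toFun A).val

namespace ACF

open Finset

variable {n : ℕ}

/-- The partner of `x` in a pairing. -/
noncomputable def pr (σ : NCPart n) (x : Fin n) : Fin n :=
  if h : ((σ.part x).erase x).Nonempty then ((σ.part x).erase x).min' h else x

section basic

variable {σ : NCPart n} (hP : IsPairing σ)

include hP in
lemma part_card (x : Fin n) : (σ.part x).card = 2 :=
  hP _ (σ.part_mem.mpr (mem_univ x))

include hP in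
lemma erase_card (x : Fin n) : ((σ.part x).erase x).card = 1 := by
  rw [Finset.card_erase_of_mem (σ.mem_part (mem_univ x)), part_card hP]

include hP in
lemma pr_spec (x : Fin n) : pr σ x ∈ σ.part x ∧ pr σ x ≠ x := by
  have h1 : ((σ.part x).erase x).Nonempty := by
    rw [← Finset.card_pos, erase_card hP]; omega
  have h2 : ((σ.part x).erase x).min' h1 ∈ (σ.part x).erase x := Finset.min'_mem _ _
  rw [pr, dif_pos h1]
  exact ⟨Finset.mem_of_mem_erase h2, Finset.ne_of_mem_erase h2⟩

include hP in
lemma pr_mem (x : Fin n) : pr σ x ∈ σ.part x := (pr_spec hP x).1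

include hP in
lemma pr_ne (x : Fin n) : pr σ x ≠ x := (pr_spec hP x).2

include hP in
lemma part_eq_pair (x : Fin n) : σ.part x = {x, pr σ x} := by
  have h3 : (σ.part x).erase x = {pr σ x} := by
    obtain ⟨a, ha⟩ := Finset.card_eq_one.mp (erase_card hP (σ := σ) x)
    have hm : pr σ x ∈ (σ.part x).erase x :=
      Finset.mem_erase.mpr ⟨pr_ne hP x, pr_mem hP x⟩
    rw [ha] at hm ⊢
    rw [Finset.mem_singleton.mp hm]
  calc σ.part x = insert x ((σ.part x).erase x) :=
        (Finset.insert_erase (σ.mem_part (mem_univ x))).symm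
    _ = {x, pr σ x} := by rw [h3]

include hP in
lemma mem_part_iff' {x y : Fin n} : y ∈ σ.part x ↔ y = x ∨ y = pr σ x := by
  rw [part_eq_pair hP]; simp

include hP in
lemma pr_eq_of_pair {a b : Fin n} (hab : ({a, b} : Finset (Fin n)) ∈ σ.parts)
    (hne : a ≠ b) : pr σ a = b := by
  have h1 : σ.part a = {a, b} := σ.part_eq_of_mem hab (by simp)
  have h2 := pr_mem hP (σ := σ) a
  rw [h1] at h2
  rcases Finset.mem_insert.mp h2 with h | h
  · exact absurd h (pr_ne hP a)
  · exact Finset.mem_singleton.mp h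

include hP in
lemma pair_mem_parts (x : Fin n) : ({x, pr σ x} : Finset (Fin n)) ∈ σ.parts := by
  rw [← part_eq_pair hP]; exact σ.part_mem.mpr (mem_univ x)

include hP in
lemma pr_invol (x : Fin n) : pr σ (pr σ x) = x := by
  have h1 : ({pr σ x, x} : Finset (Fin n)) ∈ σ.parts := by
    rw [Finset.pair_comm]; exact pair_mem_parts hP x
  exact pr_eq_of_pair hP h1 (pr_ne hP x)

include hP in
lemma sameBlock_iff {x y : Fin n} : SameBlock σ x y ↔ y = x ∨ y = pr σ x := by
  constructor
  · rintro ⟨B, hB, hx, hy⟩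
    have : B = σ.part x := (σ.part_eq_of_mem hB hx).symm
    rw [this, mem_part_iff' hP] at hy
    exact hy
  · intro h
    exact ⟨σ.part x, σ.part_mem.mpr (mem_univ x), σ.mem_part (mem_univ x),
      (mem_part_iff' hP).mpr h⟩

include hP in
lemma part_rep {W : Finset (Fin n)} (hW : W ∈ σ.parts) :
    ∃ x y : Fin n, x < y ∧ pr σ x = y ∧ W = {x, y} := by
  obtain ⟨a, b, hab, rfl⟩ := Finset.card_eq_two.mp (hP W hW)
  rcases lt_or_gt_of_ne hab with h | h
  · exact ⟨a, b, h, pr_eq_of_pair hP hW hab, rfl⟩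
  · exact ⟨b, a, h, pr_eq_of_pair hP (Finset.pair_comm a b ▸ hW) hab.symm,
      Finset.pair_comm a b⟩

include hP in
lemma parts_char {B : Finset (Fin n)} : B ∈ σ.parts ↔ ∃ x, B = {x, pr σ x} := by
  constructor
  · intro hB
    obtain ⟨x, y, _, hpr, rfl⟩ := part_rep hP hB
    exact ⟨x, by rw [hpr]⟩
  · rintro ⟨x, rfl⟩
    exact pair_mem_parts hP x

end basic

end ACF
namespace ACF

open Finset

variable {n : ℕ}

lemma pair_min {a b : Fin n} (hab : a ≤ b) :
    ({a, b} : Finset (Fin n)).min = (a : WithTop (Fin n)) := by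
  refine le_antisymm (Finset.min_le (by simp)) (Finset.le_min ?_)
  intro y hy
  simp only [Finset.mem_insert, Finset.mem_singleton] at hy
  rcases hy with rfl | rfl
  · exact le_refl _
  · exact WithTop.coe_le_coe.mpr hab

lemma pair_max {a b : Fin n} (hab : a ≤ b) :
    ({a, b} : Finset (Fin n)).max = (b : WithBot (Fin n)) := by
  refine le_antisymm (Finset.max_le ?_) (Finset.le_max (by simp))
  intro y hy
  simp only [Finset.mem_insert, Finset.mem_singleton] at hy
  rcases hy with rfl | rfl
  · exact WithBot.coe_le_coe.mpr hab
  · exact le_refl _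

lemma pair_eq_iff {a b c d : Fin n} (h1 : a < b) (h2 : c < d) :
    ({a, b} : Finset (Fin n)) = {c, d} ↔ a = c ∧ b = d := by
  constructor
  · intro h
    have ha : a ∈ ({c, d} : Finset (Fin n)) := h ▸ (by simp)
    have hb : b ∈ ({c, d} : Finset (Fin n)) := h ▸ (by simp)
    have hc : c ∈ ({a, b} : Finset (Fin n)) := h ▸ (by simp)
    have hd : d ∈ ({a, b} : Finset (Fin n)) := h ▸ (by simp)
    simp only [Finset.mem_insert, Finset.mem_singleton] at ha hb hc hd
    constructor
    · rcases ha with rfl | rfl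
      · rfl
      · rcases hc with rfl | rfl
        · rfl
        · exact absurd h2 (not_lt.mpr h1.le)
    · rcases hb with rfl | rfl
      · rcases hd with rfl | rfl
        · exact absurd h2 (not_lt.mpr (le_of_lt h1))
        · rfl
      · rfl
  · rintro ⟨rfl, rfl⟩; rfl

lemma nested_pair_iff {a b c d : Fin n} (h1 : a ≤ b) (h2 : c ≤ d) :
    Nested ({a, b} : Finset (Fin n)) {c, d} ↔ c ≤ a ∧ b ≤ d := by
  rw [Nested, pair_min h1, pair_min h2, pair_max h1, pair_max h2]
  constructor
  · rintro ⟨x, y⟩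
    exact ⟨WithTop.coe_le_coe.mp x, WithBot.coe_le_coe.mp y⟩
  · rintro ⟨x, y⟩
    exact ⟨WithTop.coe_le_coe.mpr x, WithBot.coe_le_coe.mpr y⟩

lemma sn_pair_iff {a b c d : Fin n} (h1 : a < b) (h2 : c < d) :
    StrictNested ({a, b} : Finset (Fin n)) {c, d} ↔ (c ≤ a ∧ b ≤ d) ∧ ¬(a = c ∧ b = d) := by
  rw [StrictNested, nested_pair_iff h1.le h2.le, ne_eq, pair_eq_iff h1 h2]

section nc

variable {σ : NCPart n} (hP : IsPairing σ) (hNC : IsNoncrossing σ)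

include hP hNC in
lemma no_cross {x a y d : Fin n} (h1 : pr σ x = y) (h2 : pr σ a = d)
    (hxa : x < a) (hay : a < y) (hyd : y < d) : False := by
  have hsb : SameBlock σ x a := hNC x a y d hxa hay hyd
    ((sameBlock_iff hP).mpr (Or.inr h1.symm)) ((sameBlock_iff hP).mpr (Or.inr h2.symm))
  rcases (sameBlock_iff hP).mp hsb with h | h
  · exact absurd h (ne_of_gt hxa)
  · rw [h1] at h; exact absurd h (ne_of_lt hay)

include hP hNC in
lemma pr_between {a b c : Fin n} (hab : pr σ a = b) (h1 : a < c) (h2 : c < b) :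
    a < pr σ c ∧ pr σ c < b := by
  have hca : pr σ c ≠ a := fun h => by
    have : pr σ a = c := by rw [← h, pr_invol hP]
    rw [hab] at this; exact absurd this (ne_of_gt h2)
  have hcb : pr σ c ≠ b := fun h => by
    have : pr σ b = c := by rw [← h, pr_invol hP]
    have hba : pr σ b = a := by rw [← hab, pr_invol hP]
    rw [hba] at this; exact absurd this (ne_of_lt h1)
  rcases lt_trichotomy (pr σ c) a with h | h | h
  · exact (no_cross hP hNC (pr_invol hP c) hab h h1 h2).elim
  · exact absurd h hca
  · rcases lt_trichotomy (pr σ c) b with h' | h' | h'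
    · exact ⟨h, h'⟩
    · exact absurd h' hcb
    · exact (no_cross hP hNC hab rfl h1 h2 h').elim

end nc

end ACF
namespace ACF

open Finset

variable {n : ℕ}

/-- The set of blocks strictly nesting `B`. -/
def nesters (σ : NCPart n) (B : Finset (Fin n)) : Set (Finset (Fin n)) :=
  {W | W ∈ σ.parts ∧ StrictNested B W}

lemma nesters_finite (σ : NCPart n) (B : Finset (Fin n)) : (nesters σ B).Finite :=
  Set.Finite.subset σ.parts.finite_toSet (fun _ hW => hW.1)

lemma depth_eq_nesters (σ : NCPart n) (j : Fin n) :
    blockDepth σ j = (nesters σ (σ.part j)).ncard := by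
  unfold blockDepth nesters
  congr 1
  ext W
  constructor
  · rintro ⟨hW, B, hB, hjB, hSN⟩
    exact ⟨hW, (σ.part_eq_of_mem hB hjB) ▸ hSN⟩
  · rintro ⟨hW, hSN⟩
    exact ⟨hW, σ.part j, σ.part_mem.mpr (mem_univ j), σ.mem_part (mem_univ j), hSN⟩

lemma depth_succ (σ : NCPart n) {P Q : Finset (Fin n)} {i j : Fin n}
    (hPm : P ∈ σ.parts) (hQm : Q ∈ σ.parts) (hiP : i ∈ P) (hjQ : j ∈ Q)
    (heq : nesters σ Q = insert P (nesters σ P)) :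
    blockDepth σ j = blockDepth σ i + 1 := by
  rw [depth_eq_nesters, depth_eq_nesters, σ.part_eq_of_mem hQm hjQ,
    σ.part_eq_of_mem hPm hiP, heq,
    Set.ncard_insert_of_notMem (fun h => h.2.2 rfl) (nesters_finite σ P)]

lemma depth_congr (σ : NCPart n) {P Q : Finset (Fin n)} {i j : Fin n}
    (hPm : P ∈ σ.parts) (hQm : Q ∈ σ.parts) (hiP : i ∈ P) (hjQ : j ∈ Q)
    (heq : nesters σ Q = nesters σ P) :
    blockDepth σ j = blockDepth σ i := by
  rw [depth_eq_nesters, depth_eq_nesters, σ.part_eq_of_mem hQm hjQ,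
    σ.part_eq_of_mem hPm hiP, heq]

section nc

variable {σ : NCPart n} (hP : IsPairing σ) (hNC : IsNoncrossing σ)

include hP in
lemma sn_mem_iff {b c x y : Fin n} (hbc : b < c) (hprb : pr σ b = c)
    (hxy : x < y) (hprx : pr σ x = y) :
    StrictNested ({b, c} : Finset (Fin n)) {x, y} ↔ x < b ∧ c < y := by
  rw [sn_pair_iff hbc hxy]
  constructor
  · rintro ⟨⟨h1, h2⟩, h3⟩
    refine ⟨?_, ?_⟩
    · rcases eq_or_lt_of_le h1 with h | h
      · exact absurd ⟨h.symm, by rw [← hprb, ← h]; exact hprx⟩ h3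
      · exact h
    · rcases eq_or_lt_of_le h2 with h | h
      · have e1 : pr σ c = b := by rw [← hprb, pr_invol hP]
        have e2 : pr σ y = x := by rw [← hprx, pr_invol hP]
        exact absurd ⟨by rw [← e1, h, e2], h⟩ h3
      · exact h
  · rintro ⟨h1, h2⟩
    exact ⟨⟨h1.le, h2.le⟩, fun h => absurd h.1 (ne_of_gt h1)⟩

include hP hNC in
lemma nesters_insert {a d b c : Fin n} (had : a < d) (hpra : pr σ a = d)
    (hbc : b < c) (hprb : pr σ b = c) (h1 : a < b) (h2 : c < d)
    (hadj : (b : ℕ) = (a : ℕ) + 1 ∨ (c : ℕ) + 1 = (d : ℕ)) :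
    nesters σ {b, c} = insert ({a, d} : Finset (Fin n)) (nesters σ {a, d}) := by
  ext W
  simp only [nesters, Set.mem_insert_iff, Set.mem_setOf_eq]
  constructor
  · rintro ⟨hW, hSN⟩
    obtain ⟨x, y, hxy, hprx, rfl⟩ := part_rep hP hW
    rw [sn_mem_iff hP hbc hprb hxy hprx] at hSN
    obtain ⟨hxb, hcy⟩ := hSN
    by_cases hxa : x = a
    · subst hxa
      left
      have hyd : y = d := by rw [← hprx, hpra]
      rw [hyd]
    · right
      have hxane : (x : ℕ) ≠ (a : ℕ) := fun hh => hxa (Fin.ext hh)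
      have hyd : y ≠ d := by
        intro hh
        apply hxa
        have e1 : pr σ d = a := by rw [← hpra, pr_invol hP]
        have e2 : pr σ y = x := by rw [← hprx, pr_invol hP]
        rw [← e2, hh, e1]
      have key : x < a ∧ d < y := by
        rcases hadj with h | h
        · have hxalt : x < a := by
            have hv : (x : ℕ) < (b : ℕ) := hxb
            exact Fin.lt_def.mpr (by omega)
          refine ⟨hxalt, ?_⟩
          rcases lt_trichotomy y d with hy | hy | hy
          · exact (no_cross hP hNC hprx hpra hxalt
              (lt_trans (lt_trans h1 hbc) hcy) hy).elim
          · exact absurd hy hyd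
          · exact hy
        · have hydlt : d < y := by
            have hv : (c : ℕ) < (y : ℕ) := hcy
            have hvne : (y : ℕ) ≠ (d : ℕ) := fun hh => hyd (Fin.ext hh)
            exact Fin.lt_def.mpr (by omega)
          refine ⟨?_, hydlt⟩
          rcases lt_trichotomy x a with hx | hx | hx
          · exact hx
          · exact absurd hx hxa
          · exact (no_cross hP hNC hpra hprx hx
              (lt_trans hxb (lt_trans hbc h2)) hydlt).elim
      exact ⟨hW, (sn_mem_iff hP had hpra hxy hprx).mpr key⟩
  · rintro (rfl | ⟨hW, hSN⟩)
    · exact ⟨hpra ▸ pair_mem_parts hP a, (sn_mem_iff hP hbc hprb had hpra).mpr ⟨h1, h2⟩⟩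
    · obtain ⟨x, y, hxy, hprx, rfl⟩ := part_rep hP hW
      rw [sn_mem_iff hP had hpra hxy hprx] at hSN
      exact ⟨hW, (sn_mem_iff hP hbc hprb hxy hprx).mpr
        ⟨lt_trans hSN.1 h1, lt_trans h2 hSN.2⟩⟩

include hP hNC in
lemma nesters_congr {f e e' c : Fin n} (hfe : f < e) (hprf : pr σ f = e)
    (hec : e' < c) (hpre : pr σ e' = c) (hee' : (e' : ℕ) = (e : ℕ) + 1) :
    nesters σ ({f, e} : Finset (Fin n)) = nesters σ {e', c} := by
  ext W
  simp only [nesters, Set.mem_setOf_eq]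
  have hprc : pr σ c = e' := by rw [← hpre, pr_invol hP]
  have hpre2 : pr σ e = f := by rw [← hprf, pr_invol hP]
  constructor
  · rintro ⟨hW, hSN⟩
    obtain ⟨x, y, hxy, hprx, rfl⟩ := part_rep hP hW
    rw [sn_mem_iff hP hfe hprf hxy hprx] at hSN
    obtain ⟨hxf, hey⟩ := hSN
    have hxe' : x < e' := by
      have v1 : (x : ℕ) < (f : ℕ) := hxf
      have v2 : (f : ℕ) < (e : ℕ) := hfe
      exact Fin.lt_def.mpr (by omega)
    refine ⟨hW, (sn_mem_iff hP hec hpre hxy hprx).mpr ⟨hxe', ?_⟩⟩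
    have hyne : y ≠ e' := by
      intro hh
      have : pr σ y = x := by rw [← hprx, pr_invol hP]
      rw [hh, hpre] at this
      -- this : c = x, but x < e' < c
      have := lt_trans hxe' hec
      omega
    rcases lt_trichotomy y c with hy | hy | hy
    · have hy2 : e' < y := by
        have v1 : (e : ℕ) < (y : ℕ) := hey
        have v2 : (y : ℕ) ≠ (e' : ℕ) := fun hh => hyne (Fin.ext hh)
        exact Fin.lt_def.mpr (by omega)
      exact (no_cross hP hNC hprx hpre hxe' hy2 hy).elim
    · exfalso
      apply Fin.lt_irrefl x
      calc x < e' := hxe'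
        _ = pr σ c := hprc.symm
        _ = pr σ y := by rw [hy]
        _ = x := by rw [← hprx, pr_invol hP]
    · exact hy
  · rintro ⟨hW, hSN⟩
    obtain ⟨x, y, hxy, hprx, rfl⟩ := part_rep hP hW
    rw [sn_mem_iff hP hec hpre hxy hprx] at hSN
    obtain ⟨hxe', hcy⟩ := hSN
    have hey : e < y := by
      have v1 : (c : ℕ) < (y : ℕ) := hcy
      have v2 : (e' : ℕ) < (c : ℕ) := hec
      exact Fin.lt_def.mpr (by omega)
    refine ⟨hW, (sn_mem_iff hP hfe hprf hxy hprx).mpr ⟨?_, hey⟩⟩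
    have hxne : x ≠ e := by
      intro hh
      have : y = f := by rw [← hprx, hh, hpre2]
      -- f < e = x < y = f contradiction
      rw [hh] at hxy
      rw [this] at hxy
      exact absurd (lt_trans hfe hxy) (lt_irrefl _)
    rcases lt_trichotomy x f with hx | hx | hx
    · exact hx
    · exfalso
      have : y = e := by rw [← hprx, hx, hprf]
      rw [this] at hcy
      have v1 : (c : ℕ) < (e : ℕ) := hcy
      have v2 : (e' : ℕ) < (c : ℕ) := hec
      omega
    · exfalso
      have hxe : x < e := by
        have v1 : (x : ℕ) < (e' : ℕ) := hxe'
        have v2 : (x : ℕ) ≠ (e : ℕ) := fun hh => hxne (Fin.ext hh)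
        exact Fin.lt_def.mpr (by omega)
      exact no_cross hP hNC hprf hprx hx hxe hey
end nc

end ACF
namespace ACF

open Finset

lemma even_card_invol {α : Type*} [DecidableEq α] (s : Finset α) (f : α → α)
    (hmem : ∀ x ∈ s, f x ∈ s) (hne : ∀ x ∈ s, f x ≠ x) (hinv : ∀ x ∈ s, f (f x) = x) :
    Even s.card := by
  induction s using Finset.strongInduction with
  | _ s ih =>
    rcases s.eq_empty_or_nonempty with rfl | ⟨x, hx⟩
    · simp
    · have hfx : f x ∈ s := hmem x hx
      have hfxne : f x ≠ x := hne x hx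
      set s' := s \ {x, f x} with hs'
      have hsub : ({x, f x} : Finset α) ⊆ s := by
        intro z hz
        rcases Finset.mem_insert.mp hz with rfl | hz
        · exact hx
        · rw [Finset.mem_singleton.mp hz]; exact hfx
      have hssub : s' ⊂ s := Finset.sdiff_ssubset hsub ⟨x, by simp⟩
      have hcard : s.card = s'.card + 2 := by
        rw [hs', Finset.card_sdiff_of_subset hsub, Finset.card_pair hfxne.symm]
        have : 2 ≤ s.card := by
          calc 2 = ({x, f x} : Finset α).card := (Finset.card_pair hfxne.symm).symm
          _ ≤ s.card := Finset.card_le_card hsub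
        omega
      have hmem' : ∀ z ∈ s', f z ∈ s' := by
        intro z hz
        rw [hs', Finset.mem_sdiff] at hz ⊢
        obtain ⟨hz1, hz2⟩ := hz
        refine ⟨hmem z hz1, ?_⟩
        simp only [Finset.mem_insert, Finset.mem_singleton] at hz2 ⊢
        push_neg at hz2 ⊢
        refine ⟨fun hh => hz2.2 ?_, fun hh => hz2.1 ?_⟩
        · rw [← hinv z hz1, hh]
        · have := congrArg f hh
          rw [hinv z hz1, hinv x hx] at this
          exact this
      have hne' : ∀ z ∈ s', f z ≠ z := fun z hz =>
        hne z (Finset.mem_sdiff.mp hz).1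
      have hinv' : ∀ z ∈ s', f (f z) = z := fun z hz =>
        hinv z (Finset.mem_sdiff.mp hz).1
      obtain ⟨k, hk⟩ := ih s' hssub hmem' hne' hinv'
      exact ⟨k + 1, by omega⟩

variable {n : ℕ} {σ : NCPart n} (hP : IsPairing σ) (hNC : IsNoncrossing σ)

include hP hNC in
lemma odd_dist {a : Fin n} (ha : a < pr σ a) : Odd ((pr σ a : ℕ) - (a : ℕ)) := by
  have hclosed : ∀ x ∈ Finset.Ioo a (pr σ a), pr σ x ∈ Finset.Ioo a (pr σ a) := by
    intro x hx
    rw [Finset.mem_Ioo] at hx ⊢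
    exact pr_between hP hNC rfl hx.1 hx.2
  have heven : Even (Finset.Ioo a (pr σ a)).card :=
    even_card_invol _ (pr σ) hclosed (fun x _ => pr_ne hP x)
      (fun x _ => pr_invol hP x)
  rw [Fin.card_Ioo] at heven
  obtain ⟨k, hk⟩ := heven
  exact ⟨k, by omega⟩

include hP hNC in
lemma pr_parity (x : Fin n) : (pr σ x : ℕ) % 2 ≠ (x : ℕ) % 2 := by
  rcases lt_trichotomy x (pr σ x) with h | h | h
  · obtain ⟨k, hk⟩ := odd_dist hP hNC h
    omega
  · exact absurd h.symm (pr_ne hP x)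
  · have h2 : pr σ x < pr σ (pr σ x) := by rw [pr_invol hP]; exact h
    obtain ⟨k, hk⟩ := odd_dist hP hNC h2
    rw [pr_invol hP] at hk
    omega

include hP hNC in
lemma outer_min_even {a : Fin n} (ha : a < pr σ a)
    (hout : IsOuter σ ({a, pr σ a} : Finset (Fin n))) : Even (a : ℕ) := by
  have hclosed : ∀ x ∈ Finset.Iio a, pr σ x ∈ Finset.Iio a := by
    intro x hx
    rw [Finset.mem_Iio] at hx ⊢
    have h1 : pr σ x ≠ a := fun h => by
      have : pr σ a = x := by rw [← h, pr_invol hP]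
      omega
    have h2 : pr σ x ≠ pr σ a := fun h => by
      have := congrArg (pr σ) h
      rw [pr_invol hP, pr_invol hP] at this
      omega
    rcases lt_trichotomy (pr σ x) a with h | h | h
    · exact h
    · exact absurd h h1
    · exfalso
      rcases lt_trichotomy (pr σ x) (pr σ a) with h' | h' | h'
      · exact no_cross hP hNC rfl rfl hx h h'
      · exact h2 h'
      · -- {x, pr x} strictly nests {a, pr a}, contradicting outer
        have hxlt : x < pr σ x := lt_trans (lt_trans hx ha) h'
        have hmem : ({x, pr σ x} : Finset (Fin n)) ∈ σ.parts := pair_mem_parts hP x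
        have hnest : Nested ({a, pr σ a} : Finset (Fin n)) {x, pr σ x} :=
          (nested_pair_iff ha.le hxlt.le).mpr ⟨hx.le, h'.le⟩
        have := hout.2 _ hmem hnest
        rw [pair_eq_iff hxlt ha] at this
        omega
  have heven : Even (Finset.Iio a).card :=
    even_card_invol _ (pr σ) hclosed (fun x _ => pr_ne hP x)
      (fun x _ => pr_invol hP x)
  rwa [Fin.card_Iio] at heven

include hP hNC in
lemma outerMax_odd {j : Fin n} (hj : IsOuterMax σ j) : (j : ℕ) % 2 = 1 := by
  obtain ⟨B, hBout, hjB, hjmax⟩ := hj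
  obtain ⟨x, y, hxy, hprx, rfl⟩ := part_rep hP hBout.1
  have hjy : j = y := by
    have h1 : y ≤ j := hjmax y (by simp)
    rcases Finset.mem_insert.mp hjB with rfl | hh
    · omega
    · exact Finset.mem_singleton.mp hh
  subst hjy
  have hxeven : Even (x : ℕ) := by
    exact outer_min_even hP hNC (by rw [hprx]; exact hxy) (by rw [hprx]; exact hBout)
  have := pr_parity hP hNC x
  rw [hprx] at this
  obtain ⟨k, hk⟩ := hxeven
  omega

end ACF
namespace ACF

open Finset

variable {n : ℕ}

/-- The pairing associated to a fixed-point-free involution. -/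
def pairingOfInvol (f : Fin n → Fin n) (hinv : Function.Involutive f)
    (hne : ∀ x, f x ≠ x) : NCPart n where
  parts := Finset.univ.image (fun x => ({x, f x} : Finset (Fin n)))
  supIndep := by
    rw [Finset.supIndep_iff_pairwiseDisjoint]
    intro A hA B hB hAB
    simp only [Finset.coe_image, Set.mem_image, Finset.coe_univ, Set.mem_univ,
      true_and] at hA hB
    obtain ⟨x, rfl⟩ := hA
    obtain ⟨y, rfl⟩ := hB
    simp only [id, Finset.disjoint_left]
    intro z hz1 hz2
    apply hAB
    have e1 : ({x, f x} : Finset (Fin n)) = {z, f z} := by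
      rcases Finset.mem_insert.mp hz1 with rfl | h
      · rfl
      · rw [Finset.mem_singleton.mp h, hinv x, Finset.pair_comm]
    have e2 : ({y, f y} : Finset (Fin n)) = {z, f z} := by
      rcases Finset.mem_insert.mp hz2 with rfl | h
      · rfl
      · rw [Finset.mem_singleton.mp h, hinv y, Finset.pair_comm]
    rw [e1, e2]
  sup_parts := by
    apply Finset.Subset.antisymm
    · intro z _; exact Finset.mem_univ z
    · intro z _
      rw [Finset.mem_sup]
      exact ⟨{z, f z}, Finset.mem_image.mpr ⟨z, Finset.mem_univ z, rfl⟩, by simp⟩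
  bot_notMem := by
    simp only [Finset.bot_eq_empty, Finset.mem_image]
    rintro ⟨x, -, hx⟩
    exact Finset.insert_ne_empty _ _ hx

lemma mem_pairingOfInvol {f : Fin n → Fin n} {hinv : Function.Involutive f}
    {hne : ∀ x, f x ≠ x} {B : Finset (Fin n)} :
    B ∈ (pairingOfInvol f hinv hne).parts ↔ ∃ x, B = {x, f x} := by
  simp only [pairingOfInvol, Finset.mem_image, Finset.mem_univ, true_and]
  exact ⟨fun ⟨x, h⟩ => ⟨x, h.symm⟩, fun ⟨x, h⟩ => ⟨x, h.symm⟩⟩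

lemma isPairing_pairingOfInvol {f : Fin n → Fin n} {hinv : Function.Involutive f}
    {hne : ∀ x, f x ≠ x} : IsPairing (pairingOfInvol f hinv hne) := by
  intro B hB
  obtain ⟨x, rfl⟩ := mem_pairingOfInvol.mp hB
  exact Finset.card_pair (hne x).symm

lemma pr_pairingOfInvol {f : Fin n → Fin n} {hinv : Function.Involutive f}
    {hne : ∀ x, f x ≠ x} (x : Fin n) : pr (pairingOfInvol f hinv hne) x = f x :=
  pr_eq_of_pair isPairing_pairingOfInvol
    (mem_pairingOfInvol.mpr ⟨x, rfl⟩) (hne x).symm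

lemma parts_ext {σ τ : NCPart n} (hσ : IsPairing σ) (hτ : IsPairing τ)
    (h : ∀ x, pr σ x = pr τ x) : σ = τ := by
  have hparts : σ.parts = τ.parts := by
    ext B
    rw [parts_char hσ, parts_char hτ]
    constructor
    · rintro ⟨x, rfl⟩; exact ⟨x, by rw [h]⟩
    · rintro ⟨x, rfl⟩; exact ⟨x, by rw [h]⟩
  exact Finpartition.ext hparts

end ACF
namespace ACF

open Finset

variable {m : ℕ}

def e0 (a : Fin (2*m)) : Fin (2*(2*m)) := ⟨2*(a:ℕ), by omega⟩
def e1 (a : Fin (2*m)) : Fin (2*(2*m)) := ⟨2*(a:ℕ)+1, by omega⟩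

@[simp] lemma e0_val (a : Fin (2*m)) : (e0 a : ℕ) = 2*(a:ℕ) := rfl
@[simp] lemma e1_val (a : Fin (2*m)) : (e1 a : ℕ) = 2*(a:ℕ)+1 := rfl

lemma e0_or_e1 (x : Fin (2*(2*m))) : (∃ a, x = e0 a) ∨ (∃ a, x = e1 a) := by
  rcases Nat.even_or_odd (x:ℕ) with ⟨k, hk⟩ | ⟨k, hk⟩
  · exact Or.inl ⟨⟨(x:ℕ)/2, by have := x.isLt; omega⟩, by apply Fin.ext; simp [e0]; omega⟩
  · exact Or.inr ⟨⟨(x:ℕ)/2, by have := x.isLt; omega⟩, by apply Fin.ext; simp [e1]; omega⟩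

def dblF (g : Fin (2*m) → Fin (2*m)) (x : Fin (2*(2*m))) : Fin (2*(2*m)) :=
  ⟨2*((g ⟨(x:ℕ)/2, by omega⟩ : Fin (2*m)):ℕ) + 1 - (x:ℕ)%2, by
    have := (g ⟨(x:ℕ)/2, by omega⟩).isLt; omega⟩

lemma dblF_e0 (g : Fin (2*m) → Fin (2*m)) (a : Fin (2*m)) :
    dblF g (e0 a) = e1 (g a) := by
  apply Fin.ext
  simp only [dblF, e0, e1]
  simp only [show 2*(a:ℕ)/2 = (a:ℕ) from by omega, Fin.eta]
  omega

lemma dblF_e1 (g : Fin (2*m) → Fin (2*m)) (a : Fin (2*m)) :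
    dblF g (e1 a) = e0 (g a) := by
  apply Fin.ext
  simp only [dblF, e0, e1]
  simp only [show (2*(a:ℕ)+1)/2 = (a:ℕ) from by omega, Fin.eta]
  omega

lemma dblF_invol {g : Fin (2*m) → Fin (2*m)} (hg : Function.Involutive g) :
    Function.Involutive (dblF g) := by
  intro x
  rcases e0_or_e1 x with ⟨a, rfl⟩ | ⟨a, rfl⟩
  · rw [dblF_e0, dblF_e1, hg]
  · rw [dblF_e1, dblF_e0, hg]

lemma dblF_ne (g : Fin (2*m) → Fin (2*m)) (x : Fin (2*(2*m))) : dblF g x ≠ x := by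
  rcases e0_or_e1 x with ⟨a, rfl⟩ | ⟨a, rfl⟩
  · rw [dblF_e0]; intro h; have := congrArg Fin.val h; simp at this; omega
  · rw [dblF_e1]; intro h; have := congrArg Fin.val h; simp at this; omega

section dbl

variable {π : NCPart (2*m)} (hπ : IsPairing π)

/-- The doubling of a pairing. -/
noncomputable def Dbl (π : NCPart (2*m)) (hπ : IsPairing π) : NCPart (2*(2*m)) :=
  pairingOfInvol (dblF (pr π)) (dblF_invol (fun x => pr_invol hπ x)) (dblF_ne _)

lemma isPairing_Dbl : IsPairing (Dbl π hπ) := isPairing_pairingOfInvol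

lemma pr_Dbl (x : Fin (2*(2*m))) : pr (Dbl π hπ) x = dblF (pr π) x :=
  pr_pairingOfInvol x

include hπ in
lemma mem_Dbl_iff {B : Finset (Fin (2*(2*m)))} :
    B ∈ (Dbl π hπ).parts ↔
      ∃ i j : Fin (2*m), i < j ∧ ({i, j} : Finset (Fin (2*m))) ∈ π.parts ∧
        (B = {e0 i, e1 j} ∨ B = {e1 i, e0 j}) := by
  rw [show (Dbl π hπ).parts = (pairingOfInvol (dblF (pr π)) _ _).parts from rfl]
  rw [mem_pairingOfInvol]
  constructor
  · rintro ⟨x, rfl⟩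
    rcases e0_or_e1 x with ⟨a, rfl⟩ | ⟨a, rfl⟩
    · rw [dblF_e0]
      rcases lt_trichotomy a (pr π a) with h | h | h
      · exact ⟨a, pr π a, h, pair_mem_parts hπ a, Or.inl rfl⟩
      · exact absurd h.symm (pr_ne hπ a)
      · refine ⟨pr π a, a, h, ?_, Or.inr ?_⟩
        · rw [Finset.pair_comm]; exact pair_mem_parts hπ a
        · rw [Finset.pair_comm]
    · rw [dblF_e1]
      rcases lt_trichotomy a (pr π a) with h | h | h
      · exact ⟨a, pr π a, h, pair_mem_parts hπ a, Or.inr rfl⟩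
      · exact absurd h.symm (pr_ne hπ a)
      · refine ⟨pr π a, a, h, ?_, Or.inl ?_⟩
        · rw [Finset.pair_comm]; exact pair_mem_parts hπ a
        · rw [Finset.pair_comm]
  · rintro ⟨i, j, hij, hmem, rfl | rfl⟩
    · exact ⟨e0 i, by rw [dblF_e0, pr_eq_of_pair hπ hmem (ne_of_lt hij)]⟩
    · exact ⟨e1 i, by rw [dblF_e1, pr_eq_of_pair hπ hmem (ne_of_lt hij)]⟩

end dbl

end ACF
namespace ACF

open Finset

variable {m : ℕ} {π : NCPart (2*m)} (hπ : IsPairing π) (hNCπ : IsNoncrossing π)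

include hπ hNCπ in
lemma isNoncrossing_Dbl : IsNoncrossing (Dbl π hπ) := by
  intro i1 i2 i3 i4 h12 h23 h34 hb13 hb24
  exfalso
  have hp : IsPairing (Dbl π hπ) := isPairing_Dbl hπ
  rcases (sameBlock_iff hp).mp hb13 with h | h13
  · omega
  rcases (sameBlock_iff hp).mp hb24 with h | h24
  · omega
  rw [pr_Dbl] at h13 h24
  have hSB : ∀ x : Fin (2*m), SameBlock π x (pr π x) :=
    fun x => (sameBlock_iff hπ).mpr (Or.inr rfl)
  rcases e0_or_e1 i1 with ⟨a, rfl⟩ | ⟨a, rfl⟩ <;>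
    rcases e0_or_e1 i2 with ⟨b, rfl⟩ | ⟨b, rfl⟩ <;>
    [rw [dblF_e0] at h13 h24; rw [dblF_e0] at h13; rw [dblF_e1] at h13;
      rw [dblF_e1] at h13] <;>
    [skip; rw [dblF_e1] at h24; rw [dblF_e0] at h24; rw [dblF_e1] at h24] <;>
    subst h13 <;> subst h24 <;>
    rw [Fin.lt_def] at h12 h23 h34 <;>
    simp only [e0_val, e1_val] at h12 h23 h34
  -- case 1 : i1 = e0 a, i2 = e0 b, i3 = e1 (pr π a), i4 = e1 (pr π b)
  · have hab : a < b := by omega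
    by_cases hbc : b = pr π a
    · have hba : pr π b = a := by rw [hbc, pr_invol hπ]
      rw [hba] at h34
      omega
    · have hbc' : b < pr π a := by omega
      have hce : pr π a < pr π b := by omega
      have := hNCπ a b (pr π a) (pr π b) hab hbc' hce (hSB a) (hSB b)
      rcases (sameBlock_iff hπ).mp this with h | h
      · omega
      · exact hbc h
  -- case 2 : i1 = e0 a, i2 = e1 b, i3 = e1 (pr π a), i4 = e0 (pr π b)
  · by_cases hab : a = b
    · have : pr π a = pr π b := by rw [hab]
      omega
    · have hab' : a < b := by omega
      have hbc : b < pr π a := by omega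
      have hce : pr π a < pr π b := by omega
      have := hNCπ a b (pr π a) (pr π b) hab' hbc hce (hSB a) (hSB b)
      rcases (sameBlock_iff hπ).mp this with h | h
      · exact hab h.symm
      · omega
  -- case 3 : i1 = e1 a, i2 = e0 b, i3 = e0 (pr π a), i4 = e1 (pr π b)
  · have hab : a < b := by omega
    have hbc : b < pr π a := by omega
    by_cases hce : pr π a = pr π b
    · have : a = b := by
        have := congrArg (pr π) hce
        rwa [pr_invol hπ, pr_invol hπ] at this
      omega
    · have hce' : pr π a < pr π b := by omega
      have := hNCπ a b (pr π a) (pr π b) hab hbc hce' (hSB a) (hSB b)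
      rcases (sameBlock_iff hπ).mp this with h | h
      · omega
      · omega
  -- case 4 : i1 = e1 a, i2 = e1 b, i3 = e0 (pr π a), i4 = e0 (pr π b)
  · have hab : a < b := by omega
    have hbc : b < pr π a := by omega
    have hce : pr π a < pr π b := by omega
    have := hNCπ a b (pr π a) (pr π b) hab hbc hce (hSB a) (hSB b)
    rcases (sameBlock_iff hπ).mp this with h | h
    · omega
    · omega

include hπ hNCπ in
lemma acf_Dbl (hm : 1 ≤ m)
    (h0 : ({⟨0, Nat.mul_pos (by decide) hm⟩, ⟨2*m-1, Nat.sub_lt (Nat.mul_pos (by decide) hm) Nat.one_pos⟩} : Finset (Fin (2*m))) ∈ π.parts) :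
    ACFriendly (2*m) (Dbl π hπ) := by
  have hp : IsPairing (Dbl π hπ) := isPairing_Dbl hπ
  have hnc : IsNoncrossing (Dbl π hπ) := isNoncrossing_Dbl hπ hNCπ
  have hm' : 0 < 2*m := by omega
  set z0 : Fin (2*m) := ⟨0, by omega⟩ with hz0def
  set z1 : Fin (2*m) := ⟨2*m-1, by omega⟩ with hz1def
  have hz0v : (z0 : ℕ) = 0 := rfl
  have hz1v : (z1 : ℕ) = 2*m-1 := rfl
  have hlt0 : z0 < z1 := by rw [Fin.lt_def, hz0v, hz1v]; omega
  have hP0 : ({e0 z0, e1 z1} : Finset (Fin (2*(2*m)))) ∈ (Dbl π hπ).parts :=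
    (mem_Dbl_iff hπ).mpr ⟨z0, z1, hlt0, h0, Or.inl rfl⟩
  have hle01 : e0 z0 ≤ e1 z1 := by
    rw [Fin.le_def]; simp only [e0_val, e1_val, hz0v, hz1v]; omega
  constructor
  · -- outer max condition
    intro j hj
    right
    obtain ⟨B, hBout, hjB, hjmax⟩ := hj
    have hnest : Nested B {e0 z0, e1 z1} := by
      constructor
      · rw [pair_min hle01]
        apply Finset.le_min
        intro b _
        refine WithTop.coe_le_coe.mpr ?_
        rw [Fin.le_def]
        simp only [e0_val, hz0v]
        omega
      · rw [pair_max hle01]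
        apply Finset.max_le
        intro b hb
        refine WithBot.coe_le_coe.mpr ?_
        rw [Fin.le_def]
        simp only [e1_val, hz1v]
        have := b.isLt
        omega
    have hBP0 := hBout.2 _ hP0 hnest
    rw [← hBP0] at hjmax
    have hle := hjmax (e1 z1) (by simp)
    rw [Fin.le_def] at hle
    simp only [e1_val, hz1v] at hle
    have := j.isLt
    omega
  · -- depth condition
    intro j j' hje hj' _
    obtain ⟨k, hk⟩ := hje
    have hj4 := j.isLt
    have hj'4 := j'.isLt
    obtain ⟨a, hja, hj'a⟩ : ∃ a : Fin (2*m), j = e0 a ∧ j' = e1 a := by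
      refine ⟨⟨(j:ℕ)/2, by omega⟩, ?_, ?_⟩ <;>
        (rw [Fin.ext_iff]; simp [e0_val, e1_val]; omega)
    rw [hja, hj'a]
    have hpa : pr π a ≠ a := pr_ne hπ a
    have hprp : pr π (pr π a) = a := pr_invol hπ a
    rcases lt_or_gt_of_ne hpa with h | h
    · -- pr π a < a : pair of (e0 a) is {e1 p, e0 a}, inner; pair of e1 a is outer
      obtain ⟨p, hpdef⟩ : ∃ p, pr π a = p := ⟨_, rfl⟩
      rw [hpdef] at h hprp
      have hmemπ : ({p, a} : Finset (Fin (2*m))) ∈ π.parts := by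
        rw [Finset.pair_comm, ← hpdef]; exact pair_mem_parts hπ a
      have hQm : ({e1 p, e0 a} : Finset (Fin (2*(2*m)))) ∈ (Dbl π hπ).parts :=
        (mem_Dbl_iff hπ).mpr ⟨p, a, h, hmemπ, Or.inr rfl⟩
      have hPm : ({e0 p, e1 a} : Finset (Fin (2*(2*m)))) ∈ (Dbl π hπ).parts :=
        (mem_Dbl_iff hπ).mpr ⟨p, a, h, hmemπ, Or.inl rfl⟩
      have hpra : pr (Dbl π hπ) (e0 p) = e1 a := by
        rw [pr_Dbl, dblF_e0, hprp]
      have hprb : pr (Dbl π hπ) (e1 p) = e0 a := by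
        rw [pr_Dbl, dblF_e1, hprp]
      have heq := nesters_insert hp hnc
        (by rw [Fin.lt_def]; simp only [e0_val, e1_val]; omega :
          (e0 p : Fin (2*(2*m))) < e1 a)
        hpra
        (by rw [Fin.lt_def]; simp only [e0_val, e1_val]; omega :
          (e1 p : Fin (2*(2*m))) < e0 a)
        hprb
        (by rw [Fin.lt_def]; simp only [e0_val, e1_val]; omega :
          (e0 p : Fin (2*(2*m))) < e1 p)
        (by rw [Fin.lt_def]; simp only [e0_val, e1_val]; omega :
          (e0 a : Fin (2*(2*m))) < e1 a)
        (Or.inl (by simp only [e0_val, e1_val]))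
      have := depth_succ (Dbl π hπ) hPm hQm
        (show e1 a ∈ ({e0 p, e1 a} : Finset (Fin (2*(2*m)))) by simp)
        (show e0 a ∈ ({e1 p, e0 a} : Finset (Fin (2*(2*m)))) by simp)
        heq
      omega
    · -- a < pr π a
      obtain ⟨p, hpdef⟩ : ∃ p, pr π a = p := ⟨_, rfl⟩
      rw [hpdef] at h hprp
      have hmemπ : ({a, p} : Finset (Fin (2*m))) ∈ π.parts := hpdef ▸ pair_mem_parts hπ a
      have hQm : ({e1 a, e0 p} : Finset (Fin (2*(2*m)))) ∈ (Dbl π hπ).parts :=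
        (mem_Dbl_iff hπ).mpr ⟨a, p, h, hmemπ, Or.inr rfl⟩
      have hPm : ({e0 a, e1 p} : Finset (Fin (2*(2*m)))) ∈ (Dbl π hπ).parts :=
        (mem_Dbl_iff hπ).mpr ⟨a, p, h, hmemπ, Or.inl rfl⟩
      have hpra : pr (Dbl π hπ) (e0 a) = e1 p := by
        rw [pr_Dbl, dblF_e0, hpdef]
      have hprb : pr (Dbl π hπ) (e1 a) = e0 p := by
        rw [pr_Dbl, dblF_e1, hpdef]
      have heq := nesters_insert hp hnc
        (by rw [Fin.lt_def]; simp only [e0_val, e1_val]; omega :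
          (e0 a : Fin (2*(2*m))) < e1 p)
        hpra
        (by rw [Fin.lt_def]; simp only [e0_val, e1_val]; omega :
          (e1 a : Fin (2*(2*m))) < e0 p)
        hprb
        (by rw [Fin.lt_def]; simp only [e0_val, e1_val]; omega :
          (e0 a : Fin (2*(2*m))) < e1 a)
        (by rw [Fin.lt_def]; simp only [e0_val, e1_val]; omega :
          (e0 p : Fin (2*(2*m))) < e1 p)
        (Or.inl (by simp only [e0_val, e1_val]))
      have := depth_succ (Dbl π hπ) hPm hQm
        (show e0 a ∈ ({e0 a, e1 p} : Finset (Fin (2*(2*m)))) by simp)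
        (show e1 a ∈ ({e1 a, e0 p} : Finset (Fin (2*(2*m)))) by simp)
        heq
      omega

end ACF
namespace ACF

open Finset

variable {m : ℕ} {σ : NCPart (2*(2*m))} (hP : IsPairing σ) (hNC : IsNoncrossing σ)

include hP hNC in
lemma even_not_outerMax {j : Fin (2*(2*m))} (hj : (j:ℕ) % 2 = 0) : ¬ IsOuterMax σ j :=
  fun h => by have := outerMax_odd hP hNC h; omega

include hP hNC in
lemma depth_ne (hACF : ACFriendly (2*m) σ) {j j' : Fin (2*(2*m))}
    (hj : (j:ℕ) % 2 = 0) (hj' : (j':ℕ) = (j:ℕ) + 1) :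
    blockDepth σ j ≠ blockDepth σ j' :=
  hACF.2 j j' (Nat.even_iff.mpr hj) hj' (even_not_outerMax hP hNC hj)

include hP hNC in
lemma no_adj (hACF : ACFriendly (2*m) σ) {x y : Fin (2*(2*m))}
    (hx : (x:ℕ)%2 = 0) (hy : (y:ℕ) = (x:ℕ)+1) : pr σ x ≠ y := by
  intro h
  apply depth_ne hP hNC hACF hx hy
  exact depth_congr σ (σ.part_mem.mpr (mem_univ x)) (σ.part_mem.mpr (mem_univ x))
    (by rw [← h]; exact pr_mem hP x) (σ.mem_part (mem_univ x)) rfl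

include hP hNC in
lemma pr_succ (hACF : ACFriendly (2*m) σ) {x y : Fin (2*(2*m))}
    (hx : (x:ℕ)%2 = 0) (hy : (y:ℕ) = (x:ℕ)+1) :
    (pr σ x : ℕ) = (pr σ y : ℕ) + 1 := by
  obtain ⟨u, hu⟩ : ∃ u, pr σ x = u := ⟨_, rfl⟩
  obtain ⟨v, hv⟩ : ∃ v, pr σ y = v := ⟨_, rfl⟩
  rw [hu, hv]
  have hpru : pr σ u = x := by rw [← hu, pr_invol hP]
  have hprv : pr σ v = y := by rw [← hv, pr_invol hP]
  have hux : u ≠ x := by rw [← hu]; exact pr_ne hP x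
  have hvy : v ≠ y := by rw [← hv]; exact pr_ne hP y
  have huy : u ≠ y := by rw [← hu]; exact no_adj hP hNC hACF hx hy
  have hvx : v ≠ x := by
    intro h
    subst h
    exact no_adj hP hNC hACF hx hy hprv
  have hupar : (u:ℕ) % 2 = 1 := by
    have := pr_parity hP hNC x; rw [hu] at this; omega
  have hvpar : (v:ℕ) % 2 = 0 := by
    have := pr_parity hP hNC y; rw [hv] at this; omega
  have hy2 : (y:ℕ) % 2 = 1 := by omega
  rcases lt_or_gt_of_ne hux with hcase | hcase
  · -- u < x
    rcases lt_or_gt_of_ne hvy with hvcase | hvcase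
    · -- v < y, hence v < x
      have hvxlt : v < x := by omega
      have hvu : v < u ∧ u < y := by
        have := pr_between hP hNC hprv hvxlt (by omega : x < y)
        rw [hu] at this
        exact this
      by_contra hne
      have hv1u : (v:ℕ) + 1 < (u:ℕ) := by omega
      obtain ⟨t, ht⟩ : ∃ t : Fin (2*(2*m)), (t:ℕ) = (u:ℕ) - 1 :=
        ⟨⟨(u:ℕ)-1, by omega⟩, rfl⟩
      obtain ⟨s, hs⟩ : ∃ s, pr σ t = s := ⟨_, rfl⟩
      have hprs : pr σ s = t := by rw [← hs, pr_invol hP]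
      have hsrange : v < s ∧ s < y := by
        have := pr_between hP hNC hprv (by omega : v < t) (by omega : t < y)
        rw [hs] at this
        exact this
      have hsne_u : s ≠ u := by
        intro h
        rw [h] at hprs
        rw [hpru] at hprs
        omega
      have hsne_x : s ≠ x := by
        intro h
        rw [h, hu] at hprs
        omega
      have hsu : s < u := by
        rcases lt_trichotomy s u with h | h | h
        · exact h
        · exact absurd h hsne_u
        · exfalso
          have hsx : s < x := by omega
          exact no_cross hP hNC hs hpru (by omega : t < u) h hsx
      have htpar : (t:ℕ) % 2 = 0 := by omega
      have hspar : (s:ℕ) % 2 = 1 := by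
        have := pr_parity hP hNC t; rw [hs] at this; omega
      have hst : s < t := by omega
      have heq := nesters_congr hP hNC hst hprs hcase hpru (by omega : (u:ℕ) = (t:ℕ)+1)
      exact depth_ne hP hNC hACF htpar (by omega : (u:ℕ) = (t:ℕ)+1)
        (depth_congr σ (hpru ▸ pair_mem_parts hP u) (hprs ▸ pair_mem_parts hP s)
          (by simp) (by simp) heq)
    · -- y < v : contradiction via adjacent siblings {u,x}, {y,v}
      exfalso
      have heq := nesters_congr hP hNC hcase hpru
        (hvcase : y < v) hv (by omega : (y:ℕ) = (x:ℕ)+1)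
      exact depth_ne hP hNC hACF hx hy
        (depth_congr σ (hv ▸ pair_mem_parts hP y) (hpru ▸ pair_mem_parts hP u)
          (by simp) (by simp) heq)
  · -- x < u
    have hyu : y < u := by omega
    have hvrange : x < v ∧ v < u := by
      have := pr_between hP hNC hu (by omega : x < y) hyu
      rw [hv] at this
      exact this
    by_contra hne
    have hv1u : (v:ℕ) + 1 < (u:ℕ) := by omega
    obtain ⟨v1, hv1⟩ : ∃ v1 : Fin (2*(2*m)), (v1:ℕ) = (v:ℕ) + 1 :=
      ⟨⟨(v:ℕ)+1, by omega⟩, rfl⟩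
    obtain ⟨w, hw⟩ : ∃ w, pr σ v1 = w := ⟨_, rfl⟩
    have hprw : pr σ w = v1 := by rw [← hw, pr_invol hP]
    have hwrange : x < w ∧ w < u := by
      have := pr_between hP hNC hu (by omega : x < v1) (by omega : v1 < u)
      rw [hw] at this
      exact this
    have hv1par : (v1:ℕ) % 2 = 1 := by omega
    have hwpar : (w:ℕ) % 2 = 0 := by
      have := pr_parity hP hNC v1; rw [hw] at this; omega
    have hyv : y < v := by omega
    have hwne_v : w ≠ v := by
      intro h
      rw [h, hprv] at hprw
      omega
    have hwv : v < w := by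
      rcases lt_trichotomy w v with h | h | h
      · exfalso
        have hyw : y < w := by omega
        exact no_cross hP hNC hv hprw hyw h (by omega : v < v1)
      · exact absurd h hwne_v
      · exact h
    have hv1w : v1 < w := by omega
    have heq := nesters_congr hP hNC hyv hv hv1w hw (by omega : (v1:ℕ) = (v:ℕ)+1)
    exact depth_ne hP hNC hACF hvpar (by omega : (v1:ℕ) = (v:ℕ)+1)
      (depth_congr σ (hw ▸ pair_mem_parts hP v1) (hv ▸ pair_mem_parts hP y)
        (by simp) (by simp) heq)

end ACF
namespace ACF

open Finset

variable {m : ℕ} {σ : NCPart (2*(2*m))} (hP : IsPairing σ) (hNC : IsNoncrossing σ)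

include hP hNC in
lemma pr_zero (hm : 1 ≤ m) (hACF : ACFriendly (2*m) σ) :
    (pr σ ⟨0, by omega⟩ : ℕ) = 2*(2*m) - 1 := by
  obtain ⟨z, hz⟩ : ∃ z : Fin (2*(2*m)), (z:ℕ) = 0 := ⟨⟨0, by omega⟩, rfl⟩
  rw [show (⟨0, by omega⟩ : Fin (2*(2*m))) = z from Fin.ext hz.symm]
  have hzne : pr σ z ≠ z := pr_ne hP z
  have hzlt : z < pr σ z := by omega
  have hout : IsOuter σ ({z, pr σ z} : Finset (Fin (2*(2*m)))) := by
    refine ⟨pair_mem_parts hP z, ?_⟩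
    intro V hV hnest
    obtain ⟨x', y', hxy', hprx', rfl⟩ := part_rep hP hV
    rw [nested_pair_iff hzlt.le hxy'.le] at hnest
    have hx'z : x' = z := by omega
    subst hx'z
    rw [← hprx']
  have hmax : IsOuterMax σ (pr σ z) := by
    refine ⟨{z, pr σ z}, hout, by simp, ?_⟩
    intro i hi
    rcases Finset.mem_insert.mp hi with rfl | hi
    · omega
    · rw [Finset.mem_singleton.mp hi]
  rcases hACF.1 _ hmax with h | h
  · exfalso
    rw [Nat.even_iff] at h
    have := pr_parity hP hNC z
    omega
  · exact h

end ACF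

open Finset ACF

set_option maxHeartbeats 2000000 in
/-- The doubling construction (each pair `{i,j}`, `i<j`, of a non-crossing pairing of
`{1,...,2m}` containing the pair `{1,2m}` is replaced by the two pairs `{2i-1,2j}` and
`{2i,2j-1}`) is a bijection onto the anticommutator-friendly non-crossing pairings of
`{1,...,4m}`.  (Everything is 0-indexed.) -/
theorem acFriendly_pairing_doubling (m : ℕ) (hm : 1 ≤ m) :
    ∃ e : {π : NCPart (2*m) // IsNoncrossing π ∧ IsPairing π ∧
            ({⟨0, by omega⟩, ⟨2*m-1, by omega⟩} : Finset (Fin (2*m))) ∈ π.parts} ≃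
          {σ : NCPart (2*(2*m)) //
            IsNoncrossing σ ∧ IsPairing σ ∧ ACFriendly (2*m) σ},
      ∀ π, ∀ B : Finset (Fin (2*(2*m))),
        B ∈ (e π).val.parts ↔
          ∃ i j : Fin (2*m), i < j ∧ ({i, j} : Finset (Fin (2*m))) ∈ π.val.parts ∧
            (B = {⟨2*(i:ℕ), by have := i.isLt; omega⟩,
                  ⟨2*(j:ℕ)+1, by have := j.isLt; omega⟩} ∨
             B = {⟨2*(i:ℕ)+1, by have := i.isLt; omega⟩,
                  ⟨2*(j:ℕ), by have := j.isLt; omega⟩}) := by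
  classical
  let F : {π : NCPart (2*m) // IsNoncrossing π ∧ IsPairing π ∧
            ({⟨0, by omega⟩, ⟨2*m-1, by omega⟩} : Finset (Fin (2*m))) ∈ π.parts} →
          {σ : NCPart (2*(2*m)) //
            IsNoncrossing σ ∧ IsPairing σ ∧ ACFriendly (2*m) σ} :=
    fun p => ⟨Dbl p.1 p.2.2.1, isNoncrossing_Dbl p.2.2.1 p.2.1, isPairing_Dbl p.2.2.1,
      acf_Dbl p.2.2.1 p.2.1 hm p.2.2.2⟩
  have hFinj : Function.Injective F := by
    intro p q h
    rw [Subtype.ext_iff] at h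
    apply Subtype.ext
    apply parts_ext p.2.2.1 q.2.2.1
    intro x
    have hx := congrArg (fun τ => pr τ (e1 x)) h
    rw [pr_Dbl, pr_Dbl, dblF_e1, dblF_e1] at hx
    have := congrArg Fin.val hx
    simp only [e0_val] at this
    exact Fin.ext (by omega)
  have hFsurj : Function.Surjective F := by
    rintro ⟨σ, hNCσ, hPσ, hACF⟩
    have hsucc : ∀ a : Fin (2*m), (pr σ (e0 a) : ℕ) = (pr σ (e1 a) : ℕ) + 1 :=
      fun a => pr_succ hPσ hNCσ hACF (by simp : ((e0 a : Fin (2*(2*m))):ℕ) % 2 = 0)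
        (by simp : ((e1 a : Fin (2*(2*m))):ℕ) = (e0 a : Fin (2*(2*m))) + 1)
    have hpar : ∀ a : Fin (2*m), (pr σ (e1 a) : ℕ) % 2 = 0 := by
      intro a
      have := pr_parity hPσ hNCσ (e1 a)
      have h1 : ((e1 a : Fin (2*(2*m))):ℕ) % 2 = 1 := by simp [e1_val]
      omega
    obtain ⟨g, hgdef⟩ : ∃ g : Fin (2*m) → Fin (2*m),
        ∀ a, (g a : ℕ) = (pr σ (e1 a) : ℕ)/2 :=
      ⟨fun a => ⟨(pr σ (e1 a) : ℕ)/2, by have := (pr σ (e1 a)).isLt; omega⟩,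
        fun a => rfl⟩
    have hg1 : ∀ a, pr σ (e1 a) = e0 (g a) := by
      intro a
      apply Fin.ext
      have h1 := hpar a
      have h2 := hgdef a
      simp only [e0_val]
      omega
    have hg0 : ∀ a, pr σ (e0 a) = e1 (g a) := by
      intro a
      apply Fin.ext
      have h1 := hsucc a
      have h2 := congrArg Fin.val (hg1 a)
      simp only [e0_val] at h2
      simp only [e1_val]
      omega
    have hginv : Function.Involutive g := by
      intro a
      have h1 : pr σ (e0 (g a)) = e1 a := by
        rw [← hg1 a]; exact pr_invol hPσ _
      have h2 := hg0 (g a)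
      rw [h1] at h2
      have h3 := congrArg Fin.val h2
      simp only [e1_val] at h3
      exact Fin.ext (by omega)
    have hgne : ∀ a, g a ≠ a := by
      intro a h
      have h1 := hg1 a
      rw [h] at h1
      have h2 : pr σ (e0 a) = e1 a := by
        rw [← h1, pr_invol hPσ]
      exact no_adj hPσ hNCσ hACF (by simp : ((e0 a : Fin (2*(2*m))):ℕ) % 2 = 0)
        (by simp : ((e1 a : Fin (2*(2*m))):ℕ) = (e0 a : Fin (2*(2*m))) + 1) h2
    let π := pairingOfInvol g hginv hgne
    have hπP : IsPairing π := isPairing_pairingOfInvol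
    have hπpr : ∀ a, pr π a = g a := fun a => pr_pairingOfInvol a
    have hπNC : IsNoncrossing π := by
      intro a b c e hab hbc hce hb1 hb2
      rcases (sameBlock_iff hπP).mp hb1 with h | h
      · omega
      rcases (sameBlock_iff hπP).mp hb2 with h' | h'
      · omega
      rw [hπpr] at h h'
      exfalso
      have hq1 : pr σ (e0 a) = e1 c := by rw [hg0, ← h]
      have hq2 : pr σ (e0 b) = e1 e := by rw [hg0, ← h']
      exact no_cross hPσ hNCσ hq1 hq2
        (by rw [Fin.lt_def]; simp only [e0_val]; omega)
        (by rw [Fin.lt_def]; simp only [e0_val, e1_val]; omega)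
        (by rw [Fin.lt_def]; simp only [e1_val]; omega)
    obtain ⟨z, hzv⟩ : ∃ z : Fin (2*m), (z:ℕ) = 0 := ⟨⟨0, by omega⟩, rfl⟩
    obtain ⟨z1, hz1v⟩ : ∃ z1 : Fin (2*m), (z1:ℕ) = 2*m-1 := ⟨⟨2*m-1, by omega⟩, rfl⟩
    have hπ0 : ({⟨0, by omega⟩, ⟨2*m-1, by omega⟩} : Finset (Fin (2*m))) ∈ π.parts := by
      rw [show (⟨0, by omega⟩ : Fin (2*m)) = z from Fin.ext (by simp [hzv]),
          show (⟨2*m-1, by omega⟩ : Fin (2*m)) = z1 from Fin.ext (by simp [hz1v])]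
      have h1 := hg0 z
      have hz' := pr_zero hPσ hNCσ hm hACF
      rw [show (⟨0, by omega⟩ : Fin (2*(2*m))) = e0 z from Fin.ext (by simp [e0_val]; omega)]
        at hz'
      rw [h1] at hz'
      simp only [e1_val] at hz'
      have hgz : g z = z1 := Fin.ext (by omega)
      rw [← hgz]
      exact mem_pairingOfInvol.mpr ⟨z, rfl⟩
    have hDσ : Dbl π hπP = σ := by
      apply parts_ext (isPairing_Dbl hπP) hPσ
      intro x
      rw [pr_Dbl]
      rcases e0_or_e1 x with ⟨a, rfl⟩ | ⟨a, rfl⟩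
      · rw [dblF_e0, hπpr, ← hg0]
      · rw [dblF_e1, hπpr, ← hg1]
    exact ⟨⟨π, hπNC, hπP, hπ0⟩, Subtype.ext hDσ⟩
  refine ⟨Equiv.ofBijective F ⟨hFinj, hFsurj⟩, ?_⟩
  intro p B
  show B ∈ (F p).val.parts ↔ _
  rw [show (F p).val = Dbl p.1 p.2.2.1 from rfl, mem_Dbl_iff p.2.2.1]
  rfl
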